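/- arXiv:0710.5594 — 6 statements merged into one kernel-verified Lean document; each statement's English description precedes it below -/
import Mathlib

section
/- Let q ∈ I := (−∞,0) ∪ (1,∞). Suppose there exists λ̃ ∈ ℝ^d such that (q−1)·λ̃ᵀx + 1 > 0 for K-almost every x, the function Ỹ(x) := ((q−1)·λ̃ᵀx + 1)^{1/(q−1)} satisfies ∫ g_q(Ỹ(x)) K(dx) < ∞, and the pair (λ̃, Ỹ) satisfies the martingale condition (M). Then (λ̃, Ỹ) ∈ A_q and k_q(β,Y) ≥ k_q(λ̃, Ỹ) for every (β,Y) ∈ A_q; that is, (λ̃, Ỹ) solves the minimization problem (P_q). -/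
open MeasureTheory
open scoped ENNReal RealInnerProductSpace

noncomputable section

/-- `ℝ^d` with the Euclidean norm. -/
abbrev E (d : ℕ) := EuclideanSpace ℝ (Fin d)

/-- The truncation function `h(x) = x · 1_{‖x‖ ≤ 1}`. -/
def trunc {d : ℕ} (x : E d) : E d := if ‖x‖ ≤ 1 then x else 0

/-- Action of a `d × d` matrix on a vector of `ℝ^d`. -/
def mv {d : ℕ} (c : Matrix (Fin d) (Fin d) ℝ) (v : E d) : E d :=
  (WithLp.equiv 2 (Fin d → ℝ)).symm (c.mulVec (WithLp.equiv 2 (Fin d → ℝ) v))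

/-- `K` is a Lévy measure: `K({0}) = 0` and `∫ min(1,‖x‖²) K(dx) < ∞`. -/
def IsLevyMeasure {d : ℕ} (K : Measure (E d)) : Prop :=
  K {0} = 0 ∧ ∫⁻ x, ENNReal.ofReal (min 1 (‖x‖ ^ 2)) ∂K < ⊤

/-- `g_q(y) = y^q - 1 - q(y-1)` (real exponent `q`). -/
def gq (q y : ℝ) : ℝ := y ^ q - 1 - q * (y - 1)

/-- `k_q(β, Y) = (q(q-1)/2) βᵀcβ + ∫ g_q(Y(x)) K(dx)`. -/
def kq {d : ℕ} (q : ℝ) (c : Matrix (Fin d) (Fin d) ℝ) (K : Measure (E d))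
    (β : E d) (Y : E d → ℝ) : ℝ :=
  q * (q - 1) / 2 * ⟪β, mv c β⟫ + ∫ x, gq q (Y x) ∂K

/-- The martingale condition `(M)`:
`∫ ‖x Y(x) - h(x)‖ K(dx) < ∞` and `b + cβ + ∫ (x Y(x) - h(x)) K(dx) = 0`. -/
def MCond {d : ℕ} (b : E d) (c : Matrix (Fin d) (Fin d) ℝ) (K : Measure (E d))
    (β : E d) (Y : E d → ℝ) : Prop :=
  Integrable (fun x => Y x • x - trunc x) K ∧
  b + mv c β + ∫ x, (Y x • x - trunc x) ∂K = 0

/-- Membership in the admissible set `A_q`: `Y` is measurable, `Y > 0` `K`-a.e.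
(recall that functions which agree `K`-a.e. are identified), `(β,Y)` satisfies the
martingale condition `(M)`, and `∫ g_q(Y(x)) K(dx) < ∞`, i.e. `k_q(β,Y) < ∞`. -/
def memA {d : ℕ} (q : ℝ) (b : E d) (c : Matrix (Fin d) (Fin d) ℝ)
    (K : Measure (E d)) (β : E d) (Y : E d → ℝ) : Prop :=
  Measurable Y ∧ (∀ᵐ x ∂K, 0 < Y x) ∧ MCond b c K β Y ∧
  ∫⁻ x, ENNReal.ofReal (gq q (Y x)) ∂K < ⊤

/-!
`g_q` is convex on `(0,∞)` with `g_q'(y) = q (y^(q-1) - 1)`, and the defining formula of `Ỹ` says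
exactly that `g_q'(Ỹ(x)) = q (q-1) λ̃ᵀx`. The tangent-line inequality of `g_q` at `Ỹ(x)`, integrated
against `K`, turns `∫ g_q(Y) - ∫ g_q(Ỹ)` into `q (q-1) λ̃ᵀ ∫ (Y - Ỹ)(x) x K(dx)`, which the martingale
conditions of `(β, Y)` and `(λ̃, Ỹ)` identify with `q (q-1) λ̃ᵀ c (λ̃ - β)`. Adding the quadratic
terms, `k_q(β,Y) - k_q(λ̃,Ỹ)` is bounded below by `(q (q-1) / 2) (β - λ̃)ᵀ c (β - λ̃) ≥ 0`.
-/

/-- Bernoulli's inequality for real exponents outside `[0, 1]`. -/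
theorem Real.one_add_mul_sub_one_le_rpow {q : ℝ} (hq : q < 0 ∨ 1 < q) {t : ℝ} (ht : 0 < t) :
    1 + q * (t - 1) ≤ t ^ q := by
  rcases hq with hq | hq
  · calc 1 + q * (t - 1) ≤ 1 + q * Real.log t := by
          linarith [mul_le_mul_of_nonpos_left (Real.log_le_sub_one_of_pos ht) hq.le]
      _ ≤ Real.exp (Real.log t * q) := by linarith [Real.add_one_le_exp (Real.log t * q)]
      _ = t ^ q := (Real.rpow_def_of_pos ht q).symm
  · simpa using one_add_mul_self_le_rpow_one_add (s := t - 1) (by linarith) hq.le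

/-- Tangent-line inequality for `t ↦ t ^ q`, obtained by rescaling Bernoulli's inequality. -/
theorem Real.rpow_add_mul_rpow_sub_one_mul_sub_le_rpow {q : ℝ} (hq : q < 0 ∨ 1 < q) {s t : ℝ}
    (hs : 0 < s) (ht : 0 < t) : s ^ q + q * s ^ (q - 1) * (t - s) ≤ t ^ q := by
  have hbern := Real.one_add_mul_sub_one_le_rpow hq (div_pos ht hs)
  calc s ^ q + q * s ^ (q - 1) * (t - s) = s ^ q * (1 + q * (t / s - 1)) := by
        rw [Real.rpow_sub_one hs.ne']
        field_simp
    _ ≤ s ^ q * (t / s) ^ q := by gcongr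
    _ = t ^ q := by rw [← Real.mul_rpow hs.le (div_pos ht hs).le, mul_div_cancel₀ t hs.ne']

theorem gq_nonneg {q : ℝ} (hq : q < 0 ∨ 1 < q) {y : ℝ} (hy : 0 < y) : 0 ≤ gq q y := by
  have := Real.one_add_mul_sub_one_le_rpow hq hy
  unfold gq
  linarith

theorem gq_add_deriv_mul_sub_le {q : ℝ} (hq : q < 0 ∨ 1 < q) {s t : ℝ} (hs : 0 < s) (ht : 0 < t) :
    gq q s + q * (s ^ (q - 1) - 1) * (t - s) ≤ gq q t := by
  have := Real.rpow_add_mul_rpow_sub_one_mul_sub_le_rpow hq hs ht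
  unfold gq
  linarith

theorem integrable_gq {d : ℕ} {q : ℝ} (hq : q < 0 ∨ 1 < q) {K : Measure (E d)} {Y : E d → ℝ}
    (hY : Measurable Y) (hpos : ∀ᵐ x ∂K, 0 < Y x)
    (hfin : ∫⁻ x, ENNReal.ofReal (gq q (Y x)) ∂K < ⊤) :
    Integrable (fun x => gq q (Y x)) K := by
  refine ⟨by unfold gq; fun_prop, (hasFiniteIntegral_iff_ofReal ?_).2 hfin⟩
  filter_upwards [hpos] with x hx using gq_nonneg hq hx

theorem LinearMap.IsPositive.two_mul_inner_sub_inner_le {F : Type*} [NormedAddCommGroup F]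
    [InnerProductSpace ℝ F] {T : F →ₗ[ℝ] F} (hT : T.IsPositive) (u v : F) :
    2 * ⟪u, T v⟫ - ⟪u, T u⟫ ≤ ⟪v, T v⟫ := by
  have hsymm : ⟪v, T u⟫ = ⟪u, T v⟫ := by rw [← hT.isSymmetric, real_inner_comm]
  have := hT.inner_nonneg_right (v - u)
  simp only [map_sub, inner_sub_left, inner_sub_right, hsymm] at this
  linarith

theorem two_mul_inner_mv_sub_inner_mv_le {d : ℕ} {c : Matrix (Fin d) (Fin d) ℝ}
    (hc : c.PosSemidef) (u v : E d) : 2 * ⟪u, mv c v⟫ - ⟪u, mv c u⟫ ≤ ⟪v, mv c v⟫ :=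
  (Matrix.isPositive_toEuclideanLin_iff.2 hc).two_mul_inner_sub_inner_le u v

theorem sub_smul_eq_sub_trunc_sub {d : ℕ} (a a' : ℝ) (x : E d) :
    (a - a') • x = (a • x - trunc x) - (a' • x - trunc x) := by
  rw [sub_smul]
  abel

namespace MCond

variable {d : ℕ} {b : E d} {c : Matrix (Fin d) (Fin d) ℝ} {K : Measure (E d)}
  {β β' : E d} {Y Y' : E d → ℝ}

theorem integrable_sub_smul (h : MCond b c K β Y) (h' : MCond b c K β' Y') :
    Integrable (fun x => (Y x - Y' x) • x) K := by
  simp only [sub_smul_eq_sub_trunc_sub]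
  exact h.1.sub h'.1

theorem integral_sub_smul (h : MCond b c K β Y) (h' : MCond b c K β' Y') :
    ∫ x, (Y x - Y' x) • x ∂K = mv c β' - mv c β := by
  simp only [sub_smul_eq_sub_trunc_sub]
  rw [integral_sub h.1 h'.1, eq_neg_of_add_eq_zero_right h.2, eq_neg_of_add_eq_zero_right h'.2]
  abel

end MCond

theorem kq_le_of_rpow_sub_one_eq {d : ℕ} {q : ℝ} (hq : q < 0 ∨ 1 < q) {b : E d}
    {c : Matrix (Fin d) (Fin d) ℝ} (hc : c.PosSemidef) {K : Measure (E d)} {lam β : E d}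
    {Ytil Y : E d → ℝ} (hYtil : memA q b c K lam Ytil) (hY : memA q b c K β Y)
    (hfoc : ∀ᵐ x ∂K, Ytil x ^ (q - 1) = (q - 1) * ⟪lam, x⟫ + 1) :
    kq q c K lam Ytil ≤ kq q c K β Y := by
  obtain ⟨hYtil_meas, hYtil_pos, hYtil_M, hYtil_fin⟩ := hYtil
  obtain ⟨hY_meas, hY_pos, hY_M, hY_fin⟩ := hY
  have hgYtil := integrable_gq hq hYtil_meas hYtil_pos hYtil_fin
  have hlin := (hY_M.integrable_sub_smul hYtil_M).const_inner (𝕜 := ℝ) lam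
  have htangent : ∀ᵐ x ∂K,
      gq q (Ytil x) + q * (q - 1) * ⟪lam, (Y x - Ytil x) • x⟫ ≤ gq q (Y x) := by
    filter_upwards [hYtil_pos, hY_pos, hfoc] with x hs ht hx
    have := gq_add_deriv_mul_sub_le hq hs ht
    rw [hx] at this
    rw [real_inner_smul_right]
    linarith
  have hintegral : ∫ x, gq q (Ytil x) ∂K + q * (q - 1) * ⟪lam, mv c lam - mv c β⟫
      ≤ ∫ x, gq q (Y x) ∂K := by
    rw [← hY_M.integral_sub_smul hYtil_M, ← integral_inner (hY_M.integrable_sub_smul hYtil_M),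
      ← integral_const_mul, ← integral_add hgYtil (hlin.const_mul _)]
    exact integral_mono_ae (hgYtil.add (hlin.const_mul _))
      (integrable_gq hq hY_meas hY_pos hY_fin) htangent
  have hqq : 0 < q * (q - 1) := by rcases hq with hq | hq <;> nlinarith
  have hquad := mul_le_mul_of_nonneg_left (two_mul_inner_mv_sub_inner_mv_le hc lam β) hqq.le
  rw [inner_sub_right] at hintegral
  unfold kq
  linarith

theorem stmt0_general (d : ℕ) (q : ℝ) (hq : q < 0 ∨ 1 < q)
    (b : E d) (c : Matrix (Fin d) (Fin d) ℝ) (hpsd : c.PosSemidef)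
    (K : Measure (E d))
    (lam : E d) (Ytil : E d → ℝ)
    (hYdef : ∀ x, Ytil x = ((q - 1) * ⟪lam, x⟫ + 1) ^ (1 / (q - 1)))
    (hpos : ∀ᵐ x ∂K, 0 < (q - 1) * ⟪lam, x⟫ + 1)
    (hfin : ∫⁻ x, ENNReal.ofReal (gq q (Ytil x)) ∂K < ⊤)
    (hM : MCond b c K lam Ytil) :
    memA q b c K lam Ytil ∧
      ∀ β Y, memA q b c K β Y → kq q c K lam Ytil ≤ kq q c K β Y := by
  have hq1 : q - 1 ≠ 0 := by rcases hq with hq | hq <;> linarith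
  have hYtil_eq : Ytil = fun x => ((q - 1) * ⟪lam, x⟫ + 1) ^ (1 / (q - 1)) := funext hYdef
  have hYtil_pos : ∀ᵐ x ∂K, 0 < Ytil x := by
    filter_upwards [hpos] with x hx using hYdef x ▸ Real.rpow_pos_of_pos hx _
  have hfoc : ∀ᵐ x ∂K, Ytil x ^ (q - 1) = (q - 1) * ⟪lam, x⟫ + 1 := by
    filter_upwards [hpos] with x hx
    rw [hYdef x, ← Real.rpow_mul hx.le, one_div_mul_cancel hq1, Real.rpow_one]
  have hYtil : memA q b c K lam Ytil := ⟨hYtil_eq ▸ by fun_prop, hYtil_pos, hM, hfin⟩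
  exact ⟨hYtil, fun β Y hY => kq_le_of_rpow_sub_one_eq hq hpsd hYtil hY hfoc⟩

/-- **Theorem 2.9** (sufficiency of condition `(C_q)`). -/
theorem stmt0 (d : ℕ) (hd : 1 ≤ d) (q : ℝ) (hq : q < 0 ∨ 1 < q)
    (b : E d) (c : Matrix (Fin d) (Fin d) ℝ) (hsym : c.IsSymm) (hpsd : c.PosSemidef)
    (K : Measure (E d)) (hK : IsLevyMeasure K)
    (lam : E d) (Ytil : E d → ℝ)
    (hYdef : ∀ x, Ytil x = ((q - 1) * ⟪lam, x⟫ + 1) ^ (1 / (q - 1)))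
    (hpos : ∀ᵐ x ∂K, 0 < (q - 1) * ⟪lam, x⟫ + 1)
    (hfin : ∫⁻ x, ENNReal.ofReal (gq q (Ytil x)) ∂K < ⊤)
    (hM : MCond b c K lam Ytil) :
    memA q b c K lam Ytil ∧
      ∀ β Y, memA q b c K β Y → kq q c K lam Ytil ≤ kq q c K β Y :=
  stmt0_general d q hq b c hpsd K lam Ytil hYdef hpos hfin hM
end
end

section
/- Assume ∫ ‖x‖² K(dx) < ∞ and let λ ∈ ℝ^d. Then the following two conditions are equivalent: (i) b + ∫ (x − h(x)) K(dx) = (c + ∫ x xᵀ K(dx)) λ and 1 − λᵀx > 0 for K-almost every x (the structure condition (SC) with strictly positive density); (ii) setting λ̃ := −λ and Y(x) := λ̃ᵀx + 1, one has Y > 0 K-a.e., ∫ ‖x·Y(x) − h(x)‖ K(dx) < ∞, and b + c·λ̃ + ∫ (x·Y(x) − h(x)) K(dx) = 0 (condition (C_2) with λ̃_2 = −λ). -/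
/-!
With `Y(x) = 1 - λᵀx`, the integrand of `(C₂)` splits as `(x - h(x)) - (λᵀx) x`. Both pieces are
`K`-integrable once `∫ ‖x‖² dK < ∞`, and `∫ (λᵀx) x dK = (∫ x xᵀ dK) λ`, so the drift of `(C₂)`
equals `b + ∫ (x - h(x)) dK - (c + ∫ x xᵀ dK) λ`, which vanishes exactly under `(SC)`.
-/

open MeasureTheory
open scoped ENNReal RealInnerProductSpace

noncomputable section

/-- The second-moment matrix `∫ x xᵀ K(dx)`. -/
def secondMoment {d : ℕ} (K : Measure (E d)) : Matrix (Fin d) (Fin d) ℝ :=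
  Matrix.of fun i j => ∫ x, x i * x j ∂K

section InnerSmul

variable {F : Type*} [NormedAddCommGroup F] [InnerProductSpace ℝ F] [MeasurableSpace F]
  [BorelSpace F] [SecondCountableTopology F] {μ : Measure F}

lemma integrable_inner_smul_of_integrable_norm_sq (hsq : Integrable (fun x => ‖x‖ ^ 2) μ)
    (v : F) : Integrable (fun x => ⟪v, x⟫ • x) μ := by
  refine (hsq.const_mul ‖v‖).mono' (by fun_prop) (ae_of_all _ fun x => ?_)
  calc ‖⟪v, x⟫ • x‖ = |⟪v, x⟫| * ‖x‖ := norm_smul _ _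
    _ ≤ ‖v‖ * ‖x‖ * ‖x‖ := by gcongr; exact abs_real_inner_le_norm v x
    _ = ‖v‖ * ‖x‖ ^ 2 := by ring

end InnerSmul

section Truncation

variable {d : ℕ} {K : Measure (E d)}

lemma measurable_trunc : Measurable (trunc : E d → E d) :=
  Measurable.ite (measurableSet_le (by fun_prop) measurable_const) measurable_id measurable_const

lemma norm_sub_trunc_le_sq (x : E d) : ‖x - trunc x‖ ≤ ‖x‖ ^ 2 := by
  unfold trunc
  split_ifs with h
  · simp
  · rw [sub_zero, sq]
    exact le_mul_of_one_le_left (norm_nonneg x) (not_le.mp h).le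

lemma integrable_sub_trunc (hsq : Integrable (fun x => ‖x‖ ^ 2) K) :
    Integrable (fun x : E d => x - trunc x) K :=
  hsq.mono' (measurable_id.sub measurable_trunc).aestronglyMeasurable
    (ae_of_all _ norm_sub_trunc_le_sq)

lemma integrable_apply_mul_apply (hsq : Integrable (fun x => ‖x‖ ^ 2) K) (i j : Fin d) :
    Integrable (fun x : E d => x i * x j) K := by
  refine hsq.mono' (by fun_prop) (ae_of_all _ fun x => ?_)
  rw [norm_mul, sq]
  exact mul_le_mul (PiLp.norm_apply_le x i) (PiLp.norm_apply_le x j) (norm_nonneg _)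
    (norm_nonneg _)

lemma mv_neg (c : Matrix (Fin d) (Fin d) ℝ) (v : E d) : mv c (-v) = -mv c v := by
  simp [mv, Matrix.mulVec_neg]

lemma add_mv (c c' : Matrix (Fin d) (Fin d) ℝ) (v : E d) :
    mv (c + c') v = mv c v + mv c' v := by
  simp [mv, Matrix.add_mulVec]

lemma integral_inner_smul_eq_mv_secondMoment (hsq : Integrable (fun x => ‖x‖ ^ 2) K)
    (v : E d) : ∫ x, ⟪v, x⟫ • x ∂K = mv (secondMoment K) v := by
  ext i
  have hcoord : ∀ x : E d, ⟪v, x⟫ * x i = ∑ j, x i * x j * v j := fun x => by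
    simp only [PiLp.inner_apply, Finset.sum_mul]
    exact Finset.sum_congr rfl fun j _ => by simp only [RCLike.inner_apply, conj_trivial]; ring
  calc (∫ x, ⟪v, x⟫ • x ∂K) i = ∫ x, ⟪v, x⟫ * x i ∂K :=
        ((EuclideanSpace.proj i).integral_comp_comm
          (integrable_inner_smul_of_integrable_norm_sq hsq v)).symm
    _ = ∑ j, (∫ x, x i * x j ∂K) * v j := by
        simp_rw [hcoord]
        rw [integral_finsetSum _ fun j _ => (integrable_apply_mul_apply hsq i j).mul_const _]
        simp_rw [integral_mul_const]
    _ = mv (secondMoment K) v i := by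
        simp [mv, Matrix.mulVec, dotProduct, secondMoment]

lemma neg_inner_add_one_smul_sub_trunc (v x : E d) :
    (⟪-v, x⟫ + 1) • x - trunc x = (x - trunc x) - ⟪v, x⟫ • x := by
  rw [inner_neg_left]
  module

lemma integrable_neg_inner_add_one_smul_sub_trunc (hsq : Integrable (fun x => ‖x‖ ^ 2) K)
    (v : E d) : Integrable (fun x => (⟪-v, x⟫ + 1) • x - trunc x) K := by
  simp_rw [neg_inner_add_one_smul_sub_trunc]
  exact (integrable_sub_trunc hsq).sub (integrable_inner_smul_of_integrable_norm_sq hsq v)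

lemma integral_neg_inner_add_one_smul_sub_trunc (hsq : Integrable (fun x => ‖x‖ ^ 2) K)
    (v : E d) : ∫ x, ((⟪-v, x⟫ + 1) • x - trunc x) ∂K
      = ∫ x, (x - trunc x) ∂K - mv (secondMoment K) v := by
  simp_rw [neg_inner_add_one_smul_sub_trunc]
  rw [integral_sub (integrable_sub_trunc hsq) (integrable_inner_smul_of_integrable_norm_sq hsq v),
    integral_inner_smul_eq_mv_secondMoment hsq]

end Truncation

theorem stmt2_general (d : ℕ)
    (b : E d) (c : Matrix (Fin d) (Fin d) ℝ)
    (K : Measure (E d))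
    (hsq : Integrable (fun x => ‖x‖ ^ 2) K)
    (lam : E d) :
    -- (i) structure condition (SC) with strictly positive density
    (b + ∫ x, (x - trunc x) ∂K = mv (c + secondMoment K) lam ∧
      ∀ᵐ x ∂K, 0 < 1 - ⟪lam, x⟫)
    ↔
    -- (ii) condition (C₂) for λ̃₂ := -λ, Y(x) := λ̃₂ᵀx + 1
    ((∀ᵐ x ∂K, 0 < ⟪-lam, x⟫ + 1) ∧
      Integrable (fun x => (⟪-lam, x⟫ + 1) • x - trunc x) K ∧
      b + mv c (-lam) + ∫ x, ((⟪-lam, x⟫ + 1) • x - trunc x) ∂K = 0) := by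
  have hdrift : b + mv c (-lam) + ∫ x, ((⟪-lam, x⟫ + 1) • x - trunc x) ∂K
      = (b + ∫ x, (x - trunc x) ∂K) - mv (c + secondMoment K) lam := by
    rw [integral_neg_inner_add_one_smul_sub_trunc hsq, mv_neg, add_mv]
    abel
  have hae : (∀ᵐ x ∂K, 0 < ⟪-lam, x⟫ + 1) ↔ ∀ᵐ x ∂K, 0 < 1 - ⟪lam, x⟫ := by
    simp_rw [inner_neg_left, neg_add_eq_sub]
  rw [hdrift, sub_eq_zero, hae]
  exact ⟨fun ⟨hSC, hpos⟩ => ⟨hpos, integrable_neg_inner_add_one_smul_sub_trunc hsq lam, hSC⟩,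
    fun ⟨hpos, _, hSC⟩ => ⟨hSC, hpos⟩⟩

/-- **Section 3.1**: under `∫ ‖x‖² K(dx) < ∞`, the structure condition `(SC)`
with strictly positive density `1 - λᵀx > 0` `K`-a.e. is equivalent to
condition `(C_2)` with `λ̃₂ = -λ`, `Y(x) = λ̃₂ᵀx + 1`. -/
theorem stmt2 (d : ℕ) (hd : 1 ≤ d)
    (b : E d) (c : Matrix (Fin d) (Fin d) ℝ) (hsym : c.IsSymm) (hpsd : c.PosSemidef)
    (K : Measure (E d)) (hK : IsLevyMeasure K)
    (hsq : Integrable (fun x => ‖x‖ ^ 2) K)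
    (lam : E d) :
    -- (i) structure condition (SC) with strictly positive density
    (b + ∫ x, (x - trunc x) ∂K = mv (c + secondMoment K) lam ∧
      ∀ᵐ x ∂K, 0 < 1 - ⟪lam, x⟫)
    ↔
    -- (ii) condition (C₂) for λ̃₂ := -λ, Y(x) := λ̃₂ᵀx + 1
    ((∀ᵐ x ∂K, 0 < ⟪-lam, x⟫ + 1) ∧
      Integrable (fun x => (⟪-lam, x⟫ + 1) • x - trunc x) K ∧
      b + mv c (-lam) + ∫ x, ((⟪-lam, x⟫ + 1) • x - trunc x) ∂K = 0) :=
  stmt2_general d b c K hsq lam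
end
end

section
/- Let K be a nonzero Lévy measure on ℝ with K({0}) = 0 and ∫ x² K(dx) < ∞, and let Y : ℝ → ℝ be measurable with Y > 0 K-almost everywhere. Then the set H¹(Y) := { Ψ ∈ L²(K) : ∫ Ψ(x)·x K(dx) = 0 and |Ψ(x)| ≤ a·Y(x) K-a.e. for some a > 0 } is dense in L²(K)-norm in the set H² := { Ψ ∈ L²(K) : ∫ Ψ(x)·x K(dx) = 0 }. -/
/-!
Cut `Ψ` off where `|Ψ| > n Y`. The cut-offs are dominated by multiples of `Y` and converge to `Ψ`
in `L²(K)` by dominated convergence, but they need not be orthogonal to `x`. Orthogonality is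
restored by subtracting a multiple of `g`, the clamp of `x` to `[-Y, Y]`: `g` is dominated by `Y`
and `∫ g x K(dx) > 0` because `K ≠ 0` and `K {0} = 0`. The multiple is
`∫ cutoff · x / ∫ g x`, which tends to `∫ Ψ x = 0`, so the corrected cut-offs still converge.
-/

open MeasureTheory Filter
open scoped ENNReal Topology

theorem tendsto_eLpNorm_sub_of_dominated {α E : Type*} [MeasurableSpace α] {μ : Measure α}
    [NormedAddCommGroup E] {p : ℝ≥0∞} (hp0 : p ≠ 0) (hp : p ≠ ∞) {F : ℕ → α → E} {f : α → E}
    {bound : α → ℝ} (hF : ∀ n, AEStronglyMeasurable (F n) μ) (hbound : MemLp bound p μ)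
    (h_le : ∀ n, ∀ᵐ x ∂μ, ‖F n x‖ ≤ bound x)
    (h_lim : ∀ᵐ x ∂μ, Tendsto (fun n => F n x) atTop (𝓝 (f x))) :
    Tendsto (fun n => eLpNorm (F n - f) p μ) atTop (𝓝 0) := by
  have hp_pos : 0 < p.toReal := ENNReal.toReal_pos hp0 hp
  have hf : AEStronglyMeasurable f μ := aestronglyMeasurable_of_tendsto_ae atTop hF h_lim
  have hf_le : ∀ᵐ x ∂μ, ‖f x‖ ≤ bound x := by
    filter_upwards [ae_all_iff.2 h_le, h_lim] with x hle hlim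
    exact le_of_tendsto' hlim.norm hle
  have h_lint : Tendsto (fun n => ∫⁻ x, ‖F n x - f x‖ₑ ^ p.toReal ∂μ) atTop (𝓝 0) := by
    have h_fin : ∫⁻ x, ‖2 * bound x‖ₑ ^ p.toReal ∂μ ≠ ∞ :=
      (lintegral_rpow_enorm_lt_top_of_eLpNorm_lt_top hp0 hp
        (hbound.const_mul 2).eLpNorm_lt_top).ne
    have := tendsto_lintegral_of_dominated_convergence'
      (F := fun n x => ‖F n x - f x‖ₑ ^ p.toReal) (f := fun _ => 0) _
      (fun n => ((hF n).sub hf).enorm.pow_const _) (fun n => ?_) h_fin ?_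
    · simpa using this
    · filter_upwards [h_le n, hf_le] with x hFx hfx
      gcongr
      rw [enorm_le_iff_norm_le, Real.norm_eq_abs,
        abs_of_nonneg (by linarith [norm_nonneg (f x)])]
      linarith [norm_sub_le (F n x) (f x)]
    · filter_upwards [h_lim] with x hx
      have := ((tendsto_sub_nhds_zero_iff.2 hx).enorm).ennrpow_const p.toReal
      simpa [ENNReal.zero_rpow_of_pos hp_pos] using this
  have := h_lint.ennrpow_const (1 / p.toReal)
  simp only [eLpNorm_eq_lintegral_rpow_enorm_toReal hp0 hp, Pi.sub_apply]
  simpa [ENNReal.zero_rpow_of_pos (inv_pos.2 hp_pos)] using this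

section cutoff

variable {α : Type*} {Ψ Y : α → ℝ}

noncomputable def cutoff (Ψ Y : α → ℝ) (n : ℕ) : α → ℝ := {x | |Ψ x| ≤ n * Y x}.indicator Ψ

lemma abs_cutoff_le_abs (n : ℕ) (x : α) : |cutoff Ψ Y n x| ≤ |Ψ x| :=
  norm_indicator_le_norm_self Ψ x

lemma abs_cutoff_le_mul {x : α} (hY : 0 ≤ Y x) (n : ℕ) : |cutoff Ψ Y n x| ≤ n * Y x := by
  by_cases h : |Ψ x| ≤ n * Y x
  · simp [cutoff, h]
  · simp only [cutoff, Set.indicator_of_notMem (show x ∉ {x | |Ψ x| ≤ n * Y x} from h),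
      abs_zero]
    positivity

lemma eventually_cutoff_eq {x : α} (hY : 0 < Y x) : ∀ᶠ n in atTop, cutoff Ψ Y n x = Ψ x := by
  filter_upwards [(tendsto_natCast_atTop_atTop.atTop_mul_const hY).eventually_ge_atTop |Ψ x|]
    with n hn
  simp [cutoff, hn]

variable [MeasurableSpace α] {μ : Measure α}

lemma ae_tendsto_cutoff (hYpos : ∀ᵐ x ∂μ, 0 < Y x) :
    ∀ᵐ x ∂μ, Tendsto (fun n => cutoff Ψ Y n x) atTop (𝓝 (Ψ x)) := by
  filter_upwards [hYpos] with x hx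
  exact tendsto_const_nhds.congr' (EventuallyEq.symm (eventually_cutoff_eq hx))

lemma MeasureTheory.AEStronglyMeasurable.cutoff (hΨ : AEStronglyMeasurable Ψ μ)
    (hY : AEStronglyMeasurable Y μ) (n : ℕ) : AEStronglyMeasurable (cutoff Ψ Y n) μ :=
  hΨ.indicator₀ (hΨ.norm.nullMeasurableSet_le (hY.const_mul _))

lemma MeasureTheory.MemLp.cutoff {p : ℝ≥0∞} (hΨ : MemLp Ψ p μ) (hY : AEStronglyMeasurable Y μ)
    (n : ℕ) : MemLp (cutoff Ψ Y n) p μ :=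
  hΨ.of_le (hΨ.aestronglyMeasurable.cutoff hY n) (ae_of_all _ (abs_cutoff_le_abs n))

lemma tendsto_eLpNorm_cutoff_sub {p : ℝ≥0∞} (hp0 : p ≠ 0) (hp : p ≠ ∞) (hΨ : MemLp Ψ p μ)
    (hY : AEStronglyMeasurable Y μ) (hYpos : ∀ᵐ x ∂μ, 0 < Y x) :
    Tendsto (fun n => eLpNorm (cutoff Ψ Y n - Ψ) p μ) atTop (𝓝 0) :=
  tendsto_eLpNorm_sub_of_dominated hp0 hp (hΨ.aestronglyMeasurable.cutoff hY) hΨ.norm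
    (fun n => ae_of_all _ (abs_cutoff_le_abs n)) (ae_tendsto_cutoff hYpos)

lemma tendsto_integral_cutoff_mul {X : α → ℝ} (hΨ : AEStronglyMeasurable Ψ μ)
    (hX : AEStronglyMeasurable X μ) (hΨX : Integrable (fun x => Ψ x * X x) μ)
    (hY : AEStronglyMeasurable Y μ) (hYpos : ∀ᵐ x ∂μ, 0 < Y x) :
    Tendsto (fun n => ∫ x, cutoff Ψ Y n x * X x ∂μ) atTop (𝓝 (∫ x, Ψ x * X x ∂μ)) :=
  tendsto_integral_of_dominated_convergence (fun x => |Ψ x * X x|)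
    (fun n => (hΨ.cutoff hY n).mul hX) hΨX.abs
    (fun n => ae_of_all _ fun x => by
      simpa only [Real.norm_eq_abs, abs_mul] using
        mul_le_mul_of_nonneg_right (abs_cutoff_le_abs n x) (abs_nonneg (X x)))
    (by filter_upwards [ae_tendsto_cutoff hYpos] with x hx using hx.mul_const _)

end cutoff

section obliqueProj

variable {α : Type*} [MeasurableSpace α] {μ : Measure α} {X g : α → ℝ}

noncomputable def obliqueProj (μ : Measure α) (X g φ : α → ℝ) : α → ℝ :=
  fun x => φ x - (∫ y, φ y * X y ∂μ) / (∫ y, g y * X y ∂μ) * g x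

lemma integral_obliqueProj_mul_eq_zero {φ : α → ℝ} (hφ : Integrable (fun x => φ x * X x) μ)
    (hg : Integrable (fun x => g x * X x) μ) (hc : ∫ x, g x * X x ∂μ ≠ 0) :
    ∫ x, obliqueProj μ X g φ x * X x ∂μ = 0 := by
  simp only [obliqueProj, sub_mul, mul_assoc]
  rw [integral_sub hφ (hg.const_mul _), integral_const_mul, div_mul_cancel₀ _ hc, sub_self]

lemma tendsto_eLpNorm_sub_obliqueProj {p : ℝ≥0∞} (hp : 1 ≤ p) {φ : ℕ → α → ℝ} {ψ : α → ℝ}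
    (hφ : ∀ n, AEStronglyMeasurable (φ n) μ) (hψ : AEStronglyMeasurable ψ μ) (hg : MemLp g p μ)
    (hφψ : Tendsto (fun n => eLpNorm (φ n - ψ) p μ) atTop (𝓝 0))
    (hφX : Tendsto (fun n => ∫ x, φ n x * X x ∂μ) atTop (𝓝 0)) :
    Tendsto (fun n => eLpNorm (ψ - obliqueProj μ X g (φ n)) p μ) atTop (𝓝 0) := by
  set c : ℕ → ℝ := fun n => (∫ x, φ n x * X x ∂μ) / ∫ x, g x * X x ∂μ
  have h_eq : ∀ n, ψ - obliqueProj μ X g (φ n) = (ψ - φ n) + c n • g := fun n => by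
    funext x
    simp only [obliqueProj, c, Pi.add_apply, Pi.sub_apply, Pi.smul_apply, smul_eq_mul]
    ring
  have h_le : ∀ n, eLpNorm (ψ - obliqueProj μ X g (φ n)) p μ ≤
      eLpNorm (φ n - ψ) p μ + ‖c n‖ₑ * eLpNorm g p μ := fun n => by
    rw [h_eq, ← eLpNorm_const_smul, eLpNorm_sub_comm]
    exact eLpNorm_add_le (hψ.sub (hφ n)) (hg.1.const_smul _) hp
  have hc : Tendsto (fun n => ‖c n‖ₑ * eLpNorm g p μ) atTop (𝓝 0) := by
    simpa using ENNReal.Tendsto.mul_const ((hφX.div_const _).enorm) (Or.inr hg.eLpNorm_ne_top)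
  exact tendsto_of_tendsto_of_tendsto_of_le_of_le tendsto_const_nhds
    (by simpa using hφψ.add hc) (fun _ => zero_le) h_le

end obliqueProj

lemma exists_pos_abs_sub_mul_le {α : Type*} [MeasurableSpace α] {μ : Measure α}
    {φ g Y : α → ℝ} {a b : ℝ} (hY : ∀ᵐ x ∂μ, 0 ≤ Y x) (hφ : ∀ᵐ x ∂μ, |φ x| ≤ a * Y x)
    (hg : ∀ᵐ x ∂μ, |g x| ≤ b * Y x) (c : ℝ) :
    ∃ a' > 0, ∀ᵐ x ∂μ, |φ x - c * g x| ≤ a' * Y x := by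
  refine ⟨|a| + |c| * |b| + 1, by positivity, ?_⟩
  filter_upwards [hY, hφ, hg] with x hYx hφx hgx
  calc |φ x - c * g x| ≤ |φ x| + |c| * |g x| := by rw [← abs_mul]; exact abs_sub _ _
    _ ≤ a * Y x + |c| * (b * Y x) := by gcongr
    _ ≤ (|a| + |c| * |b| + 1) * Y x := by
      nlinarith [le_abs_self a, le_abs_self b, abs_nonneg c, mul_nonneg (abs_nonneg c) hYx]

lemma exists_memLp_abs_le_integral_mul_pos {K : Measure ℝ} (hK0 : K {0} = 0) (hKne : K ≠ 0)
    (hx : MemLp (fun x => x) 2 K) {Y : ℝ → ℝ} (hY : Measurable Y) (hYpos : ∀ᵐ x ∂K, 0 < Y x) :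
    ∃ g : ℝ → ℝ, MemLp g 2 K ∧ (∀ᵐ x ∂K, |g x| ≤ Y x) ∧ 0 < ∫ x, g x * x ∂K := by
  set g : ℝ → ℝ := fun x => max (-Y x) (min x (Y x))
  have hg_le : ∀ x, 0 ≤ Y x → |g x| ≤ |x| ∧ |g x| ≤ Y x := fun x hYx => by
    simp only [g, abs_le, max_def, min_def]
    constructor <;> split_ifs <;> constructor <;>
      linarith [abs_nonneg x, le_abs_self x, neg_abs_le x]
  have hg_pos : ∀ x, x ≠ 0 → 0 < Y x → 0 < g x * x := fun x hx hYx => by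
    simp only [g, max_def, min_def]
    rcases hx.lt_or_gt with hx | hx <;> split_ifs <;> nlinarith
  have hg : MemLp g 2 K := hx.of_le (hY.neg.max (measurable_id.min hY)).aestronglyMeasurable
    (by filter_upwards [hYpos] with x hYx using (hg_le x hYx.le).1)
  have hgx_pos : ∀ᵐ x ∂K, 0 < g x * x := by
    filter_upwards [hYpos, compl_mem_ae_iff.2 hK0] with x hYx hx
    exact hg_pos x hx hYx
  refine ⟨g, hg, by filter_upwards [hYpos] with x hYx using (hg_le x hYx.le).2, ?_⟩
  rw [integral_pos_iff_support_of_nonneg_ae (hgx_pos.mono fun x hx => hx.le)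
    (hg.integrable_mul hx)]
  refine (Measure.measure_univ_pos.2 hKne).trans_le (measure_mono_ae ?_)
  filter_upwards [hgx_pos] with x hx _ using hx.ne'

/-- **Lemma 3.3**: for a nonzero Lévy measure `K` on `ℝ` with `∫ x² K(dx) < ∞` and
measurable `Y > 0` `K`-a.e., the set
`H¹(Y) = {Ψ ∈ L²(K) : ∫ Ψ(x) x K(dx) = 0, |Ψ| ≤ a Y K-a.e. for some a > 0}`
is dense (in `L²(K)`-norm) in `H² = {Ψ ∈ L²(K) : ∫ Ψ(x) x K(dx) = 0}`. -/
theorem stmt3 (K : Measure ℝ) (hK0 : K {0} = 0) (hKne : K ≠ 0)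
    (hsq : Integrable (fun x => x ^ 2) K)
    (Y : ℝ → ℝ) (hYmeas : Measurable Y) (hYpos : ∀ᵐ x ∂K, 0 < Y x)
    (Ψ : ℝ → ℝ) (hΨ : MemLp Ψ 2 K) (hΨorth : ∫ x, Ψ x * x ∂K = 0)
    (ε : ℝ) (hε : 0 < ε) :
    ∃ Φ : ℝ → ℝ, MemLp Φ 2 K ∧ (∫ x, Φ x * x ∂K = 0) ∧
      (∃ a > 0, ∀ᵐ x ∂K, |Φ x| ≤ a * Y x) ∧
      eLpNorm (fun x => Ψ x - Φ x) 2 K < ENNReal.ofReal ε := by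
  have hx : MemLp (fun x => x) 2 K :=
    (memLp_two_iff_integrable_sq aestronglyMeasurable_id).2 hsq
  have hY : AEStronglyMeasurable Y K := hYmeas.aestronglyMeasurable
  obtain ⟨g, hg, hgY, hgx⟩ := exists_memLp_abs_le_integral_mul_pos hK0 hKne hx hYmeas hYpos
  have hlim : Tendsto (fun n => eLpNorm (Ψ - obliqueProj K id g (cutoff Ψ Y n)) 2 K)
      atTop (𝓝 0) :=
    tendsto_eLpNorm_sub_obliqueProj one_le_two (hΨ.aestronglyMeasurable.cutoff hY)
      hΨ.aestronglyMeasurable hg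
      (tendsto_eLpNorm_cutoff_sub two_ne_zero ENNReal.ofNat_ne_top hΨ hY hYpos)
      (hΨorth ▸ tendsto_integral_cutoff_mul hΨ.aestronglyMeasurable hx.aestronglyMeasurable
        (hΨ.integrable_mul hx) hY hYpos)
  obtain ⟨n, hn⟩ := (hlim.eventually (gt_mem_nhds (ENNReal.ofReal_pos.2 hε))).exists
  have hΨn := hΨ.cutoff hY n
  refine ⟨obliqueProj K id g (cutoff Ψ Y n), hΨn.sub (hg.const_mul _),
    integral_obliqueProj_mul_eq_zero (hΨn.integrable_mul hx) (hg.integrable_mul hx) hgx.ne',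
    exists_pos_abs_sub_mul_le (b := 1) (hYpos.mono fun x hx => hx.le)
      (hYpos.mono fun x hx => abs_cutoff_le_mul hx.le n) (by simpa only [one_mul] using hgY) _,
    hn⟩
end

section
/- Let q = 2 and assume ∫ ‖x‖² K(dx) < ∞ and that c is positive definite (invertible). If (β₂, Y₂) ∈ A_2 minimizes k_2 over A_2, then Y₂(x) = β₂ᵀx + 1 for K-almost every x; in particular β₂ᵀx + 1 > 0 K-a.e., so condition (C_2) holds with λ̃_2 = β₂. -/
open MeasureTheory
open scoped ENNReal RealInnerProductSpace

noncomputable section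

/-!
Perturb the minimiser in a direction `(γ, δ)`, where `δ` is bounded by `1` and supported on a set
`S` of finite `K`-measure on which `Y₂` is bounded away from `0` and `x` is bounded, and where
`c γ = -∫ δ(x) x K(dx)` keeps the martingale condition. Then `t ↦ k₂(β₂ + tγ, Y₂ + tδ)` is a
quadratic polynomial with a minimum at `t = 0`, so its linear coefficient
`⟨γ, c β₂⟩ + ∫ (Y₂ - 1) δ dK` vanishes; as `c` is symmetric, `⟨γ, c β₂⟩ = -∫ δ(x) β₂ᵀx K(dx)`, so
`∫ (Y₂(x) - β₂ᵀx - 1) δ(x) K(dx) = 0`. The choice `δ = 1_S · sign(Y₂(x) - β₂ᵀx - 1)` gives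
`Y₂(x) = β₂ᵀx + 1` a.e. on `S`, and countably many such `S` (the shells) exhaust the set
`{Y₂ > 0, x ≠ 0}`, which has full `K`-measure.
-/

open Filter

lemma gq_two (y : ℝ) : gq 2 y = (y - 1) ^ 2 := by
  rw [gq, Real.rpow_two]; ring

lemma kq_two {d : ℕ} (c : Matrix (Fin d) (Fin d) ℝ) (K : Measure (E d)) (β : E d)
    (Y : E d → ℝ) : kq 2 c K β Y = ⟪β, mv c β⟫ + ∫ x, (Y x - 1) ^ 2 ∂K := by
  simp only [kq, gq_two]; norm_num

lemma eq_zero_of_forall_abs_lt_nonneg {A B ε : ℝ} (hε : 0 < ε)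
    (h : ∀ t, |t| < ε → 0 ≤ t * B + t ^ 2 * A) : B = 0 := by
  have hmin : IsLocalMin (fun t => t * B + t ^ 2 * A) 0 :=
    mem_of_superset (Metric.ball_mem_nhds 0 hε) fun t ht => by
      simpa using h t (by simpa using ht)
  have hderiv : HasDerivAt (fun t => t * B + t ^ 2 * A) B 0 := by
    have h := ((hasDerivAt_id' (0 : ℝ)).mul_const B).add ((hasDerivAt_pow 2 (0 : ℝ)).mul_const A)
    norm_num at h
    exact h
  exact hmin.hasDerivAt_eq_zero hderiv

lemma monotone_sign_real : Monotone fun z : ℝ => (SignType.sign z : ℝ) := fun a b hab => by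
  rcases lt_trichotomy a 0 with ha | rfl | ha <;> rcases lt_trichotomy b 0 with hb | rfl | hb <;>
    simp [sign_neg, sign_pos, *] <;> linarith

lemma abs_sign_real_le_one (z : ℝ) : |(SignType.sign z : ℝ)| ≤ 1 := by
  rcases lt_trichotomy z 0 with h | rfl | h <;> simp [sign_neg, sign_pos, *]

section Matrix

variable {d : ℕ} {c : Matrix (Fin d) (Fin d) ℝ}

lemma exists_mv_eq (hc : IsUnit c.det) (w : E d) : ∃ γ, mv c γ = w :=
  ⟨mv c⁻¹ w, by simp [mv, Matrix.mulVec_mulVec, Matrix.mul_nonsing_inv _ hc]⟩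

lemma inner_mv_comm (hc : c.IsHermitian) (u v : E d) : ⟪u, mv c v⟫ = ⟪mv c u, v⟫ :=
  (Matrix.isSymmetric_toEuclideanLin_iff.2 hc u v).symm

lemma inner_add_smul_mv_add_smul (hc : c.IsHermitian) (β γ : E d) (t : ℝ) :
    ⟪β + t • γ, mv c (β + t • γ)⟫ =
      ⟪β, mv c β⟫ + t * (2 * ⟪γ, mv c β⟫) + t ^ 2 * ⟪γ, mv c γ⟫ := by
  have hlin : mv c (β + t • γ) = mv c β + t • mv c γ := by
    simp [mv, Matrix.mulVec_add, Matrix.mulVec_smul]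
  have hsym : ⟪β, mv c γ⟫ = ⟪γ, mv c β⟫ := by rw [inner_mv_comm hc, real_inner_comm]
  rw [hlin, inner_add_left, inner_add_right, inner_add_right, real_inner_smul_left,
    real_inner_smul_left, real_inner_smul_right, real_inner_smul_right, hsym]
  ring

end Matrix

section Integrability

variable {α : Type*} [MeasurableSpace α] {μ : Measure α} {S : Set α} {δ : α → ℝ}

lemma memLp_of_abs_le_indicator (p : ℝ≥0∞) (hS : MeasurableSet S) (hSμ : μ S ≠ ∞)
    (hδm : AEStronglyMeasurable δ μ) (hδ : ∀ x, |δ x| ≤ S.indicator 1 x) : MemLp δ p μ :=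
  (memLp_indicator_const p hS (1 : ℝ) (Or.inr hSμ)).mono hδm <| ae_of_all _ fun x => by
    rw [Real.norm_eq_abs, Real.norm_eq_abs]
    exact (hδ x).trans (le_abs_self _)

lemma integrable_smul_of_abs_le_indicator {F : Type*} [NormedAddCommGroup F] [NormedSpace ℝ F]
    {f : α → F} {R : ℝ} (hS : MeasurableSet S) (hSμ : μ S ≠ ∞)
    (hδm : AEStronglyMeasurable δ μ) (hf : AEStronglyMeasurable f μ)
    (hδ : ∀ x, |δ x| ≤ S.indicator 1 x) (hfR : ∀ x ∈ S, ‖f x‖ ≤ R) :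
    Integrable (fun x => δ x • f x) μ := by
  refine ((integrable_indicator_iff hS).2 (integrableOn_const hSμ (C := R))).mono' (hδm.smul hf)
    (ae_of_all _ fun x => ?_)
  have hδx := hδ x
  by_cases hx : x ∈ S
  · simp only [Set.indicator_of_mem hx, Pi.one_apply] at hδx ⊢
    rw [norm_smul, Real.norm_eq_abs]
    nlinarith [hfR x hx, norm_nonneg (f x), abs_nonneg (δ x)]
  · simp only [Set.indicator_of_notMem hx] at hδx ⊢
    simp [abs_nonpos_iff.1 hδx]

lemma integral_add_mul_sq {f g : α → ℝ} (hf : MemLp f 2 μ) (hg : MemLp g 2 μ) (t : ℝ) :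
    ∫ x, (f x + t * g x) ^ 2 ∂μ =
      ∫ x, f x ^ 2 ∂μ + t * (2 * ∫ x, f x * g x ∂μ) + t ^ 2 * ∫ x, g x ^ 2 ∂μ := by
  have hfg : Integrable (fun x => f x * g x) μ := hf.integrable_mul hg
  have hexp : (fun x => (f x + t * g x) ^ 2) =
      fun x => f x ^ 2 + t * 2 * (f x * g x) + t ^ 2 * g x ^ 2 := by
    funext x; ring
  have h₁ : Integrable (fun x => f x ^ 2 + t * 2 * (f x * g x)) μ :=
    hf.integrable_sq.add (hfg.const_mul _)
  rw [hexp, integral_add h₁ (hg.integrable_sq.const_mul _),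
    integral_add hf.integrable_sq (hfg.const_mul _), integral_const_mul, integral_const_mul]
  ring

lemma ae_eq_zero_on_of_integral_mul_indicator_sign {f : α → ℝ}
    (hint : Integrable (fun x => f x * S.indicator (fun y => (SignType.sign (f y) : ℝ)) x) μ)
    (h : ∫ x, f x * S.indicator (fun y => (SignType.sign (f y) : ℝ)) x ∂μ = 0) :
    ∀ᵐ x ∂μ, x ∈ S → f x = 0 := by
  have hnn : 0 ≤ᵐ[μ] fun x => f x * S.indicator (fun y => (SignType.sign (f y) : ℝ)) x :=
    ae_of_all _ fun x => by by_cases hx : x ∈ S <;> simp [hx]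
  filter_upwards [(integral_eq_zero_iff_of_nonneg_ae hnn hint).1 h] with x hx hxS
  simpa [hxS] using hx

end Integrability

section Perturbation

variable {d : ℕ} {b : E d} {c : Matrix (Fin d) (Fin d) ℝ} {K : Measure (E d)} {β γ : E d}
  {Y δ : E d → ℝ}

lemma memA.memLp_sub_one (h : memA 2 b c K β Y) : MemLp (fun x => Y x - 1) 2 K := by
  refine (memLp_two_iff_integrable_sq (h.1.sub_const 1).aestronglyMeasurable).2
    ⟨((h.1.sub_const 1).pow_const 2).aestronglyMeasurable, ?_⟩
  rw [hasFiniteIntegral_iff_ofReal (ae_of_all _ fun x => sq_nonneg _)]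
  simpa only [gq_two] using h.2.2.2

lemma kq_two_add_smul (hc : c.IsHermitian) (hY : MemLp (fun x => Y x - 1) 2 K)
    (hδ : MemLp δ 2 K) (t : ℝ) :
    kq 2 c K (β + t • γ) (fun x => Y x + t * δ x) = kq 2 c K β Y
      + t * (2 * (⟪γ, mv c β⟫ + ∫ x, (Y x - 1) * δ x ∂K))
      + t ^ 2 * (⟪γ, mv c γ⟫ + ∫ x, δ x ^ 2 ∂K) := by
  have hsq : ∫ x, (Y x + t * δ x - 1) ^ 2 ∂K = ∫ x, (Y x - 1 + t * δ x) ^ 2 ∂K := by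
    congr 1; funext x; ring
  rw [kq_two, kq_two, inner_add_smul_mv_add_smul hc, hsq, integral_add_mul_sq hY hδ]
  ring

lemma memA_two_add_smul {S : Set (E d)} {ε R t : ℝ} (h : memA 2 b c K β Y)
    (hS : MeasurableSet S) (hSK : K S ≠ ∞) (hSY : ∀ x ∈ S, ε ≤ Y x) (hSR : ∀ x ∈ S, ‖x‖ ≤ R)
    (hδm : Measurable δ) (hδ : ∀ x, |δ x| ≤ S.indicator 1 x)
    (hγ : mv c γ = -∫ x, δ x • x ∂K) (ht : |t| < ε) :
    memA 2 b c K (β + t • γ) (fun x => Y x + t * δ x) := by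
  have hY₂ := h.memLp_sub_one
  obtain ⟨hYm, hYpos, ⟨hMint, hMeq⟩, -⟩ := h
  have hδx : Integrable (fun x => t • (δ x • x)) K :=
    (integrable_smul_of_abs_le_indicator hS hSK hδm.aestronglyMeasurable
      aestronglyMeasurable_id hδ hSR).smul t
  have hsplit : (fun x => (Y x + t * δ x) • x - trunc x) =
      fun x => (Y x • x - trunc x) + t • (δ x • x) := by
    funext x; rw [add_smul, smul_smul]; abel
  refine ⟨hYm.add (measurable_const.mul hδm), ?_, ⟨?_, ?_⟩, ?_⟩
  · filter_upwards [hYpos] with x hx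
    by_cases hxS : x ∈ S
    · have htδ : |t * δ x| < ε := by
        have := hδ x
        rw [Set.indicator_of_mem hxS, Pi.one_apply] at this
        rw [abs_mul]
        nlinarith [abs_nonneg t, abs_nonneg (δ x)]
      linarith [neg_abs_le (t * δ x), hSY x hxS]
    · have := hδ x
      rw [Set.indicator_of_notMem hxS, abs_nonpos_iff] at this
      simpa [this] using hx
  · rw [hsplit]
    exact hMint.add hδx
  · have hmv : mv c (β + t • γ) = mv c β + t • mv c γ := by
      simp [mv, Matrix.mulVec_add, Matrix.mulVec_smul]
    rw [hsplit, integral_add hMint hδx, integral_smul, hmv, hγ, smul_neg, ← hMeq]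
    abel
  · have hsq : MemLp (fun x => Y x - 1 + t * δ x) 2 K :=
      hY₂.add
        ((memLp_of_abs_le_indicator 2 hS hSK hδm.aestronglyMeasurable hδ).const_mul t)
    simpa only [gq_two, show ∀ x, Y x + t * δ x - 1 = Y x - 1 + t * δ x from fun x => by ring]
      using hsq.integrable_sq.lintegral_lt_top

end Perturbation

section Minimizer

variable {d : ℕ} {b : E d} {c : Matrix (Fin d) (Fin d) ℝ} {K : Measure (E d)} {β : E d}
  {Y δ : E d → ℝ} {S : Set (E d)} {ε R : ℝ}

theorem integrable_and_integral_residual_mul_eq_zero (hc : c.PosDef) (hmem : memA 2 b c K β Y)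
    (hmin : ∀ β' Y', memA 2 b c K β' Y' → kq 2 c K β Y ≤ kq 2 c K β' Y')
    (hS : MeasurableSet S) (hSK : K S ≠ ∞) (hε : 0 < ε) (hSY : ∀ x ∈ S, ε ≤ Y x)
    (hSR : ∀ x ∈ S, ‖x‖ ≤ R) (hδm : Measurable δ) (hδ : ∀ x, |δ x| ≤ S.indicator 1 x) :
    Integrable (fun x => (Y x - (⟪β, x⟫ + 1)) * δ x) K ∧
      ∫ x, (Y x - (⟪β, x⟫ + 1)) * δ x ∂K = 0 := by
  obtain ⟨γ, hγ⟩ := exists_mv_eq hc.det_pos.ne'.isUnit (-∫ x, δ x • x ∂K)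
  have hδ₂ : MemLp δ 2 K := memLp_of_abs_le_indicator 2 hS hSK hδm.aestronglyMeasurable hδ
  have hδx : Integrable (fun x => δ x • x) K :=
    integrable_smul_of_abs_le_indicator hS hSK hδm.aestronglyMeasurable
      aestronglyMeasurable_id hδ hSR
  have hYδ : Integrable (fun x => (Y x - 1) * δ x) K := hmem.memLp_sub_one.integrable_mul hδ₂
  have hβδ : Integrable (fun x => ⟪β, x⟫ * δ x) K := by
    simpa only [real_inner_smul_right, mul_comm] using hδx.const_inner (𝕜 := ℝ) β
  have hB : ⟪γ, mv c β⟫ + ∫ x, (Y x - 1) * δ x ∂K = 0 := by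
    suffices 2 * (⟪γ, mv c β⟫ + ∫ x, (Y x - 1) * δ x ∂K) = 0 by linarith
    refine eq_zero_of_forall_abs_lt_nonneg (A := ⟪γ, mv c γ⟫ + ∫ x, δ x ^ 2 ∂K) hε
      fun t ht => ?_
    have hle := hmin _ _ (memA_two_add_smul hmem hS hSK hSY hSR hδm hδ hγ ht)
    rw [kq_two_add_smul hc.1 hmem.memLp_sub_one hδ₂] at hle
    linarith
  have hγβ : ⟪γ, mv c β⟫ = -∫ x, ⟪β, x⟫ * δ x ∂K := by
    rw [inner_mv_comm hc.1, hγ, inner_neg_left, real_inner_comm, ← integral_inner hδx]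
    simp only [real_inner_smul_right, mul_comm]
  have hsplit : (fun x => (Y x - (⟪β, x⟫ + 1)) * δ x) =
      fun x => (Y x - 1) * δ x - ⟪β, x⟫ * δ x := by
    funext x; ring
  refine ⟨hsplit ▸ hYδ.sub hβδ, ?_⟩
  rw [hsplit, integral_sub hYδ hβδ]
  linarith

theorem ae_eq_inner_add_one_on (hc : c.PosDef) (hmem : memA 2 b c K β Y)
    (hmin : ∀ β' Y', memA 2 b c K β' Y' → kq 2 c K β Y ≤ kq 2 c K β' Y')
    (hS : MeasurableSet S) (hSK : K S ≠ ∞) (hε : 0 < ε) (hSY : ∀ x ∈ S, ε ≤ Y x)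
    (hSR : ∀ x ∈ S, ‖x‖ ≤ R) :
    ∀ᵐ x ∂K, x ∈ S → Y x = ⟪β, x⟫ + 1 := by
  set Z : E d → ℝ := fun x => Y x - (⟪β, x⟫ + 1)
  have hZm : Measurable Z :=
    hmem.1.sub ((continuous_const.inner continuous_id).measurable.add_const 1)
  have hδm : Measurable (S.indicator fun x => (SignType.sign (Z x) : ℝ)) :=
    (monotone_sign_real.measurable.comp hZm).indicator hS
  have hδ : ∀ x, |S.indicator (fun x => (SignType.sign (Z x) : ℝ)) x| ≤ S.indicator 1 x := by
    intro x
    by_cases hx : x ∈ S <;> simp [hx, abs_sign_real_le_one]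
  obtain ⟨hint, hzero⟩ :=
    integrable_and_integral_residual_mul_eq_zero hc hmem hmin hS hSK hε hSY hSR hδm hδ
  filter_upwards [ae_eq_zero_on_of_integral_mul_indicator_sign hint hzero] with x hx hxS
  exact sub_eq_zero.1 (hx hxS)

end Minimizer

section Levy

variable {d : ℕ} {K : Measure (E d)}

lemma IsLevyMeasure.ae_ne_zero (hK : IsLevyMeasure K) : ∀ᵐ x ∂K, x ≠ 0 :=
  measure_eq_zero_iff_ae_notMem.1 hK.1

lemma IsLevyMeasure.measure_le_norm_lt_top (hK : IsLevyMeasure K) {r : ℝ} (hr : 0 < r) :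
    K {x | r ≤ ‖x‖} < ∞ := by
  set m := ENNReal.ofReal (min 1 (r ^ 2))
  have hm : m ≠ 0 := (ENNReal.ofReal_pos.2 (lt_min one_pos (by positivity))).ne'
  have hsub : {x : E d | r ≤ ‖x‖} ⊆ {x | m ≤ ENNReal.ofReal (min 1 (‖x‖ ^ 2))} := fun x hx =>
    ENNReal.ofReal_le_ofReal (min_le_min le_rfl (pow_le_pow_left₀ hr.le hx 2))
  calc K {x | r ≤ ‖x‖} ≤ (∫⁻ x, ENNReal.ofReal (min 1 (‖x‖ ^ 2)) ∂K) / m :=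
        (measure_mono hsub).trans (meas_ge_le_lintegral_div (by fun_prop) hm ENNReal.ofReal_ne_top)
    _ < ∞ := ENNReal.div_lt_top hK.2.ne hm

end Levy

def shell {d : ℕ} (Y : E d → ℝ) (n : ℕ) : Set (E d) :=
  {x | 1 / ((n : ℝ) + 1) ≤ Y x ∧ 1 / ((n : ℝ) + 1) ≤ ‖x‖ ∧ ‖x‖ ≤ n + 1}

lemma measurableSet_shell {d : ℕ} {Y : E d → ℝ} (hY : Measurable Y) (n : ℕ) :
    MeasurableSet (shell Y n) :=
  (measurableSet_le measurable_const hY).inter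
    ((measurableSet_le measurable_const measurable_norm).inter
      (measurableSet_le measurable_norm measurable_const))

lemma eventually_mem_shell {d : ℕ} {Y : E d → ℝ} {x : E d} (hY : 0 < Y x) (hx : x ≠ 0) :
    ∀ᶠ n in atTop, x ∈ shell Y n := by
  have hsmall := tendsto_one_div_add_atTop_nhds_zero_nat (𝕜 := ℝ)
  refine ((hsmall.eventually (eventually_le_nhds hY)).and
    ((hsmall.eventually (eventually_le_nhds (norm_pos_iff.2 hx))).and
      ((tendsto_natCast_atTop_atTop (R := ℝ)).eventually_ge_atTop ‖x‖))).mono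
    fun n ⟨h₁, h₂, h₃⟩ => ⟨h₁, h₂, by linarith⟩

theorem stmt4_general (d : ℕ)
    (b : E d) (c : Matrix (Fin d) (Fin d) ℝ) (hpd : c.PosDef)
    (K : Measure (E d)) (hK : IsLevyMeasure K)
    (β₂ : E d) (Y₂ : E d → ℝ)
    (hmem : memA 2 b c K β₂ Y₂)
    (hmin : ∀ β Y, memA 2 b c K β Y → kq 2 c K β₂ Y₂ ≤ kq 2 c K β Y) :
    (∀ᵐ x ∂K, Y₂ x = ⟪β₂, x⟫ + 1) ∧ (∀ᵐ x ∂K, 0 < ⟪β₂, x⟫ + 1) := by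
  have hshell : ∀ n, ∀ᵐ x ∂K, x ∈ shell Y₂ n → Y₂ x = ⟪β₂, x⟫ + 1 := fun n =>
    ae_eq_inner_add_one_on hpd hmem hmin (measurableSet_shell hmem.1 n)
      ((measure_mono fun x hx => hx.2.1).trans_lt
        (hK.measure_le_norm_lt_top (by positivity))).ne
      (by positivity) (fun x hx => hx.1) (fun x hx => hx.2.2)
  have hY : ∀ᵐ x ∂K, Y₂ x = ⟪β₂, x⟫ + 1 := by
    filter_upwards [ae_all_iff.2 hshell, hmem.2.1, hK.ae_ne_zero] with x hx hpos hx0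
    obtain ⟨n, hn⟩ := (eventually_mem_shell hpos hx0).exists
    exact hx n hn
  refine ⟨hY, ?_⟩
  filter_upwards [hY, hmem.2.1] with x hx hpos
  rwa [← hx]

/-- **Theorem 3.1, case 1**: if `∫ ‖x‖² K(dx) < ∞`, `c` is positive definite and
`(β₂, Y₂)` minimizes `k₂` over `A₂`, then `Y₂(x) = β₂ᵀx + 1` `K`-a.e.; in particular
`β₂ᵀx + 1 > 0` `K`-a.e., so condition `(C₂)` holds with `λ̃₂ = β₂`. -/
theorem stmt4 (d : ℕ) (hd : 1 ≤ d)
    (b : E d) (c : Matrix (Fin d) (Fin d) ℝ) (hsym : c.IsSymm) (hpd : c.PosDef)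
    (K : Measure (E d)) (hK : IsLevyMeasure K)
    (hsq : Integrable (fun x => ‖x‖ ^ 2) K)
    (β₂ : E d) (Y₂ : E d → ℝ)
    (hmem : memA 2 b c K β₂ Y₂)
    (hmin : ∀ β Y, memA 2 b c K β Y → kq 2 c K β₂ Y₂ ≤ kq 2 c K β Y) :
    (∀ᵐ x ∂K, Y₂ x = ⟪β₂, x⟫ + 1) ∧ (∀ᵐ x ∂K, 0 < ⟪β₂, x⟫ + 1) :=
  stmt4_general d b c hpd K hK β₂ Y₂ hmem hmin
end
end

section
/- For every q ∈ I := (−∞,0) ∪ (1,∞) there exists a constant c = c(q) > 0 such that (1 − √y)² ≤ c·g_q(y) for all y > 0. -/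
/-!
For fixed `y > 0` the map `p ↦ g_p(y) = y ^ p - 1 - p (y - 1)` is convex and vanishes at `p = 0`
and `p = 1`, while `(1 - √y)² = -2 g_{1/2}(y)`. Monotonicity of the secant slopes of this convex
function across `0` (for `q < 0`) or across `1` (for `q > 1`) bounds `-g_{1/2}(y)` by a fixed
multiple of `g_q(y)`, giving `c = 1 / (-q)` and `c = 1 / (q - 1)` respectively.
-/

noncomputable section

open Set

theorem gq_zero_left (y : ℝ) : gq 0 y = 0 := by simp [gq]

theorem gq_one_left (y : ℝ) : gq 1 y = 0 := by simp [gq]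

theorem convexOn_gq_left {y : ℝ} (hy : 0 < y) : ConvexOn ℝ univ (fun p => gq p y) := by
  have h := ((convexOn_rpow_left hy).add
    ((LinearMap.lsmul ℝ ℝ (1 - y)).convexOn convex_univ)).add_const (-1)
  refine h.congr fun p _ => ?_
  simp only [gq, Pi.add_apply, LinearMap.lsmul_apply, smul_eq_mul]
  ring

theorem sq_one_sub_sqrt_eq_neg_two_mul_gq {y : ℝ} (hy : 0 ≤ y) :
    (1 - Real.sqrt y) ^ 2 = -2 * gq (1 / 2) y := by
  rw [gq, ← Real.sqrt_eq_rpow]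
  linear_combination Real.sq_sqrt hy

theorem neg_gq_le_mul_gq_of_lt_one_of_one_lt {p q y : ℝ} (hy : 0 < y) (hp : p < 1)
    (hq : 1 < q) : -gq p y ≤ (1 - p) / (q - 1) * gq q y := by
  have h := (convexOn_gq_left hy).slope_mono_adjacent (mem_univ p) (mem_univ q) hp hq
  rw [gq_one_left] at h
  have hp' : 0 < 1 - p := sub_pos.2 hp
  calc -gq p y = (1 - p) * ((0 - gq p y) / (1 - p)) := by field_simp; ring
    _ ≤ (1 - p) * ((gq q y - 0) / (q - 1)) := by gcongr
    _ = (1 - p) / (q - 1) * gq q y := by ring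

theorem neg_gq_le_mul_gq_of_neg_of_pos {p q y : ℝ} (hy : 0 < y) (hq : q < 0) (hp : 0 < p) :
    -gq p y ≤ p / -q * gq q y := by
  have h := (convexOn_gq_left hy).slope_mono_adjacent (mem_univ q) (mem_univ p) hq hp
  rw [gq_zero_left] at h
  have hp' : p ≠ 0 := hp.ne'
  calc -gq p y = -(p * ((gq p y - 0) / (p - 0))) := by field_simp; ring
    _ ≤ -(p * ((0 - gq q y) / (0 - q))) := by gcongr
    _ = p / -q * gq q y := by ring

/-- **Lemma B.1**: for `q ∈ (-∞,0) ∪ (1,∞)` there is `c = c(q) > 0` with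
`(1 - √y)² ≤ c g_q(y)` for all `y > 0`. -/
theorem stmt8 (q : ℝ) (hq : q < 0 ∨ 1 < q) :
    ∃ c > 0, ∀ y : ℝ, 0 < y → (1 - Real.sqrt y) ^ 2 ≤ c * gq q y := by
  rcases hq with hq | hq
  · refine ⟨1 / -q, by have := neg_pos.2 hq; positivity, fun y hy => ?_⟩
    have h := neg_gq_le_mul_gq_of_neg_of_pos hy hq one_half_pos
    rw [sq_one_sub_sqrt_eq_neg_two_mul_gq hy.le]
    linarith [show 1 / 2 / -q * gq q y = 1 / -q * gq q y / 2 by ring]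
  · refine ⟨1 / (q - 1), by have := sub_pos.2 hq; positivity, fun y hy => ?_⟩
    have h := neg_gq_le_mul_gq_of_lt_one_of_one_lt hy one_half_lt_one hq
    rw [sq_one_sub_sqrt_eq_neg_two_mul_gq hy.le]
    linarith [show (1 - 1 / 2) / (q - 1) * gq q y = 1 / (q - 1) * gq q y / 2 by ring]
end
end

section
/- For every q ∈ I := (−∞,0) ∪ (1,∞) there exists a constant C = C(q) > 0 such that min((y−1)², |y−1|) ≤ C·g_q(y) for all y > 0. -/
noncomputable section

/-! `g_q` is convex on `(0, ∞)` with `g_q 1 = g_q' 1 = 0`, and on `[1/2, 3/2]` its second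
derivative `q (q - 1) y ^ (q - 2)` is at least `q (q - 1) 2 ^ (-|q - 2|) > 0`. So `g_q` minus a
multiple of `(y - 1)²` is still convex there, with horizontal tangent at `1`: `g_q` grows
quadratically near `1`. Away from `1`, convexity makes the secant slope of `g_q` from `1`
increase, which turns the quadratic growth at distance `1/2` into linear growth. -/

open Real Set

theorem ConvexOn.add_mul_sub_le_of_hasDerivAt {S : Set ℝ} {f : ℝ → ℝ} {x y f' : ℝ}
    (hf : ConvexOn ℝ S f) (hx : x ∈ S) (hy : y ∈ S) (hf' : HasDerivAt f f' x) :
    f x + f' * (y - x) ≤ f y := by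
  rcases lt_trichotomy x y with hxy | rfl | hyx
  · have h := hf.le_slope_of_hasDerivAt hx hy hxy hf'
    rw [slope_def_field, le_div_iff₀ (sub_pos.2 hxy)] at h
    linarith
  · simp
  · have h := hf.slope_le_of_hasDerivAt hy hx hyx hf'
    rw [slope_def_field, div_le_iff₀ (sub_pos.2 hyx)] at h
    linarith

theorem ConvexOn.mul_min_sq_abs_le_sub {S : Set ℝ} {f : ℝ → ℝ} (hf : ConvexOn ℝ S f)
    {x₀ δ k : ℝ} (hx₀ : x₀ ∈ S) (hδ : 0 < δ) (hδ₁ : δ ≤ 1) (hk : 0 ≤ k)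
    (hloc : ∀ z ∈ S, |z - x₀| ≤ δ → k * (z - x₀) ^ 2 ≤ f z - f x₀)
    {y : ℝ} (hy : y ∈ S) :
    k * δ * min ((y - x₀) ^ 2) |y - x₀| ≤ f y - f x₀ := by
  rcases le_or_gt |y - x₀| δ with hnear | hfar
  · calc k * δ * min ((y - x₀) ^ 2) |y - x₀| ≤ k * δ * (y - x₀) ^ 2 := by
          gcongr; exact min_le_left _ _
      _ ≤ k * (y - x₀) ^ 2 := by
          rw [mul_right_comm]; exact mul_le_of_le_one_right (by positivity) hδ₁
      _ ≤ f y - f x₀ := hloc y hy hnear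
  · -- the point `z` at distance `δ` from `x₀` towards `y` sees the local bound, and convexity
    -- along the segment `[x₀, y]` transports it to `y`
    have hdist : 0 < |y - x₀| := hδ.trans hfar
    set t := δ / |y - x₀| with ht
    have ht0 : 0 ≤ t := by positivity
    have ht1 : t ≤ 1 := (div_le_one hdist).2 hfar.le
    set z := (1 - t) * x₀ + t * y with hz
    have hzx₀ : |z - x₀| = δ := by
      rw [hz, show (1 - t) * x₀ + t * y - x₀ = t * (y - x₀) by ring,
        abs_mul, abs_of_nonneg ht0, ht, div_mul_cancel₀ _ hdist.ne']
    have hconv : f z ≤ (1 - t) * f x₀ + t * f y :=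
      hf.2 hx₀ hy (sub_nonneg.2 ht1) ht0 (by ring)
    have hlocz := hloc z (hf.1 hx₀ hy (sub_nonneg.2 ht1) ht0 (by ring)) hzx₀.le
    rw [← sq_abs, hzx₀] at hlocz
    have hkey : k * δ ^ 2 ≤ δ / |y - x₀| * (f y - f x₀) := by rw [← ht]; linarith
    rw [div_mul_eq_mul_div, le_div_iff₀ hdist] at hkey
    calc k * δ * min ((y - x₀) ^ 2) |y - x₀| ≤ k * δ * |y - x₀| := by
          gcongr; exact min_le_right _ _
      _ ≤ f y - f x₀ := by nlinarith

theorem two_rpow_neg_abs_le_rpow {p y : ℝ} (hy₁ : 1 / 2 ≤ y) (hy₂ : y ≤ 2) :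
    (2 : ℝ) ^ (-|p|) ≤ y ^ p := by
  rcases le_or_gt 0 p with hp | hp
  · rw [abs_of_nonneg hp, rpow_neg zero_le_two, ← inv_rpow zero_le_two, ← one_div]
    exact rpow_le_rpow (by norm_num) hy₁ hp
  · rw [abs_of_neg hp, neg_neg]
    exact rpow_le_rpow_of_nonpos (by linarith) hy₂ hp.le

theorem gq_one (q : ℝ) : gq q 1 = 0 := by simp [gq]

theorem hasDerivAt_gq (q : ℝ) {y : ℝ} (hy : 0 < y) :
    HasDerivAt (gq q) (q * (y ^ (q - 1) - 1)) y := by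
  have h := ((hasDerivAt_rpow_const (p := q) (Or.inl hy.ne')).sub_const 1).sub
    (((hasDerivAt_id' y).sub_const 1).const_mul q)
  exact h.congr_deriv (by ring)

theorem hasDerivAt_deriv_gq (q : ℝ) {y : ℝ} (hy : 0 < y) :
    HasDerivAt (fun y => q * (y ^ (q - 1) - 1)) (q * (q - 1) * y ^ (q - 2)) y := by
  have h := ((hasDerivAt_rpow_const (p := q - 1) (Or.inl hy.ne')).sub_const 1).const_mul q
  exact h.congr_deriv (by ring_nf)

theorem convexOn_gq_sub_mul_sq {q k : ℝ} {D : Set ℝ} (hD : Convex ℝ D) (hD₀ : D ⊆ Ioi 0)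
    (hk : ∀ y ∈ interior D, 2 * k ≤ q * (q - 1) * y ^ (q - 2)) :
    ConvexOn ℝ D (fun y => gq q y - k * (y - 1) ^ 2) := by
  have hpos : ∀ y ∈ interior D, 0 < y := fun y hy => hD₀ (interior_subset hy)
  refine convexOn_of_hasDerivWithinAt2_nonneg hD
    (f' := fun y => q * (y ^ (q - 1) - 1) - 2 * k * (y - 1))
    (f'' := fun y => q * (q - 1) * y ^ (q - 2) - 2 * k) ?_ ?_ ?_ ?_
  · exact fun y hy => ((hasDerivAt_gq q (hD₀ hy)).continuousAt.sub
      (by fun_prop)).continuousWithinAt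
  · intro y hy
    have h := (hasDerivAt_gq q (hpos y hy)).sub
      ((((hasDerivAt_id' y).sub_const 1).pow 2).const_mul k)
    exact (h.congr_deriv (by ring)).hasDerivWithinAt
  · intro y hy
    have h := (hasDerivAt_deriv_gq q (hpos y hy)).sub
      (((hasDerivAt_id' y).sub_const 1).const_mul (2 * k))
    exact (h.congr_deriv (by ring)).hasDerivWithinAt
  · exact fun y hy => sub_nonneg.2 (hk y hy)

theorem convexOn_gq {q : ℝ} (hq : 0 ≤ q * (q - 1)) : ConvexOn ℝ (Ioi 0) (gq q) := by
  simpa using convexOn_gq_sub_mul_sq (k := 0) (convex_Ioi 0) subset_rfl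
    fun y hy => by
      rw [mul_zero]; exact mul_nonneg hq (rpow_nonneg (le_of_lt (interior_subset hy)) _)

theorem mul_sq_le_gq {q : ℝ} (hq : 0 ≤ q * (q - 1)) {y : ℝ} (hy : |y - 1| ≤ 1 / 2) :
    q * (q - 1) * 2 ^ (-|q - 2|) / 2 * (y - 1) ^ 2 ≤ gq q y := by
  set k := q * (q - 1) * 2 ^ (-|q - 2|) / 2
  have hD₀ : Icc (1 / 2 : ℝ) (3 / 2) ⊆ Ioi 0 := fun z hz => lt_of_lt_of_le (by norm_num) hz.1
  have hconv : ConvexOn ℝ (Icc (1 / 2) (3 / 2)) (fun z => gq q z - k * (z - 1) ^ 2) := by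
    refine convexOn_gq_sub_mul_sq (convex_Icc _ _) hD₀ fun z hz => ?_
    rw [interior_Icc, mem_Ioo] at hz
    have h := two_rpow_neg_abs_le_rpow (p := q - 2) hz.1.le (by linarith)
    calc 2 * k = q * (q - 1) * 2 ^ (-|q - 2|) := by ring
      _ ≤ q * (q - 1) * z ^ (q - 2) := by gcongr
  have hderiv : HasDerivAt (fun z => gq q z - k * (z - 1) ^ 2) 0 1 := by
    have h := (hasDerivAt_gq q one_pos).sub
      ((((hasDerivAt_id' (1 : ℝ)).sub_const 1).pow 2).const_mul k)
    exact h.congr_deriv (by simp)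
  rw [abs_le] at hy
  have h := hconv.add_mul_sub_le_of_hasDerivAt (x := 1) (y := y) (by norm_num)
    (by constructor <;> linarith) hderiv
  simp only [gq_one] at h
  linarith

/-- **Lemma B.3**: for `q ∈ (-∞,0) ∪ (1,∞)` there is `C = C(q) > 0` with
`min((y-1)², |y-1|) ≤ C g_q(y)` for all `y > 0`. -/
theorem stmt10 (q : ℝ) (hq : q < 0 ∨ 1 < q) :
    ∃ C > 0, ∀ y : ℝ, 0 < y → min ((y - 1) ^ 2) |y - 1| ≤ C * gq q y := by
  have hqq : 0 < q * (q - 1) := by rcases hq with h | h <;> nlinarith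
  set k := q * (q - 1) * 2 ^ (-|q - 2|) / 2
  have hk : 0 < k := by positivity
  refine ⟨(k * (1 / 2))⁻¹, by positivity, fun y hy => ?_⟩
  have hloc : ∀ z ∈ Ioi (0 : ℝ), |z - 1| ≤ 1 / 2 → k * (z - 1) ^ 2 ≤ gq q z - gq q 1 :=
    fun z _ hz => by rw [gq_one, sub_zero]; exact mul_sq_le_gq hqq.le hz
  have h := (convexOn_gq hqq.le).mul_min_sq_abs_le_sub (mem_Ioi.2 one_pos) (by norm_num)
    (by norm_num) hk.le hloc (mem_Ioi.2 hy)
  rw [gq_one, sub_zero] at h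
  rw [inv_mul_eq_div, le_div_iff₀ (by positivity)]
  linarith
end
end
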